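/- Let F be a continuous CDF on [0, ∞), k_min ≤ K, p ∈ (0,1) and c_nz = (Σ_{n=k_min}^{K} C(K,n) p^n(1−p)^{K−n})^{-1}. For k ≤ k_min, define G_k(x) = Σ_{n=k_min}^{K} Σ_{ℓ=k}^{n} C(n,ℓ) C(K,n) c_nz p^n (1−p)^{K−n} F(x)^ℓ (1−F(x))^{n−ℓ}. Then G_k is a CDF (nondecreasing, right-continuous, with limits 0 at −∞ and 1 at +∞), and G_k(x) ≥ G_{k+1}(x) for all x and all k < k_min, i.e., higher-order statistics stochastically dominate lower ones. -/

import Mathlib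

/-!
Writing `b_{n,ℓ}(t) = C(n,ℓ) t^ℓ (1-t)^(n-ℓ)` for the Bernstein polynomials, `G_k(x) = P_k(F x)`
where `P_k` is the mixture, with weights `c_nz · b_{K,n}(p)` summing to `1`, of the binomial tails
`T_{n,k} = ∑_{ℓ=k}^{n} b_{n,ℓ}`. Since `b'_{n,ℓ} = n (b_{n-1,ℓ-1} - b_{n-1,ℓ})`, the derivative of
`T_{n,k+1}` telescopes to `n b_{n-1,k} ≥ 0`, so every tail with `k ≥ 1` increases on `[0,1]` from
`0` to `1`, and tails decrease in `k` because the `b_{n,ℓ}` are nonnegative there. Composing with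
the continuous CDF `F` turns these properties of `P_k` into those of `G_k`.
-/

open Filter Polynomial Finset

noncomputable def binomialTail (R : Type*) [CommRing R] (n k : ℕ) : R[X] :=
  ∑ ν ∈ Icc k n, bernsteinPolynomial R n ν

theorem bernsteinPolynomial.eval_nonneg {R : Type*} [CommRing R] [PartialOrder R]
    [IsOrderedRing R] (n ν : ℕ) {t : R} (h0 : 0 ≤ t) (h1 : t ≤ 1) :
    0 ≤ (bernsteinPolynomial R n ν).eval t := by
  simp only [bernsteinPolynomial, eval_mul, eval_pow, eval_sub, eval_one, eval_X, eval_natCast]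
  have : 0 ≤ 1 - t := sub_nonneg.2 h1
  positivity

theorem bernsteinPolynomial.eval_pos {R : Type*} [CommRing R] [LinearOrder R]
    [IsStrictOrderedRing R] {n ν : ℕ} (hνn : ν ≤ n) {t : R} (h0 : 0 < t) (h1 : t < 1) :
    0 < (bernsteinPolynomial R n ν).eval t := by
  simp only [bernsteinPolynomial, eval_mul, eval_pow, eval_sub, eval_one, eval_X, eval_natCast]
  have : (0 : R) < n.choose ν := mod_cast Nat.choose_pos hνn
  have : 0 < 1 - t := sub_pos.2 h1
  positivity

namespace binomialTail

section CommRing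

variable (R : Type*) [CommRing R]

theorem eval_eq (n k : ℕ) (t : R) :
    (binomialTail R n k).eval t = ∑ l ∈ Icc k n, (n.choose l : R) * t ^ l * (1 - t) ^ (n - l) := by
  simp [binomialTail, bernsteinPolynomial, eval_finsetSum]

theorem derivative_succ (n k : ℕ) :
    derivative (binomialTail R n (k + 1)) = n * bernsteinPolynomial R (n - 1) k := by
  rcases n with _ | n
  · simp [binomialTail]
  rcases le_or_gt k n with hkn | hnk
  · rw [binomialTail, derivative_sum, ← map_add_right_Icc, sum_map]
    simp only [addRightEmbedding_apply, bernsteinPolynomial.derivative_succ, add_tsub_cancel_right]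
    simp_rw [← mul_sum, ← neg_sub (bernsteinPolynomial R n (_ + 1)), sum_neg_distrib,
      sum_Icc_sub hkn, bernsteinPolynomial.eq_zero_of_lt R (Nat.lt_succ_self n)]
    ring
  · simp [binomialTail, Icc_eq_empty_of_lt (Nat.succ_lt_succ hnk),
      bernsteinPolynomial.eq_zero_of_lt R hnk]

theorem eval_zero (n : ℕ) {k : ℕ} (hk : k ≠ 0) : (binomialTail R n k).eval 0 = 0 := by
  rw [binomialTail, eval_finsetSum]
  refine sum_eq_zero fun ν hν => ?_
  rw [bernsteinPolynomial.eval_at_0, if_neg (by grind)]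

theorem eval_one {n k : ℕ} (hkn : k ≤ n) : (binomialTail R n k).eval 1 = 1 := by
  simp [binomialTail, eval_finsetSum, bernsteinPolynomial.eval_at_1, hkn]

end CommRing

theorem eval_succ_le {R : Type*} [CommRing R] [PartialOrder R] [IsOrderedRing R]
    (n k : ℕ) {t : R} (h0 : 0 ≤ t) (h1 : t ≤ 1) :
    (binomialTail R n (k + 1)).eval t ≤ (binomialTail R n k).eval t := by
  rw [binomialTail, binomialTail, eval_finsetSum, eval_finsetSum]
  exact sum_le_sum_of_subset_of_nonneg (Icc_subset_Icc_left k.le_succ)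
    fun ν _ _ => bernsteinPolynomial.eval_nonneg n ν h0 h1

theorem eval_pos {R : Type*} [CommRing R] [LinearOrder R] [IsStrictOrderedRing R]
    {n k : ℕ} (hkn : k ≤ n) {t : R} (h0 : 0 < t) (h1 : t < 1) :
    0 < (binomialTail R n k).eval t := by
  rw [binomialTail, eval_finsetSum]
  exact sum_pos' (fun ν _ => bernsteinPolynomial.eval_nonneg n ν h0.le h1.le)
    ⟨k, left_mem_Icc.2 hkn, bernsteinPolynomial.eval_pos hkn h0 h1⟩

theorem monotoneOn (n : ℕ) {k : ℕ} (hk : k ≠ 0) :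
    MonotoneOn (fun t => (binomialTail ℝ n k).eval t) (Set.Icc 0 1) := by
  obtain ⟨k, rfl⟩ := Nat.exists_eq_succ_of_ne_zero hk
  refine monotoneOn_of_deriv_nonneg (convex_Icc 0 1) (Polynomial.continuousOn _)
    (Polynomial.differentiableOn _) fun t ht => ?_
  rw [interior_Icc] at ht
  rw [Polynomial.deriv, derivative_succ, eval_mul, eval_natCast]
  exact mul_nonneg n.cast_nonneg (bernsteinPolynomial.eval_nonneg _ _ ht.1.le ht.2.le)

end binomialTail

noncomputable def binomialTailMixture (s : Finset ℕ) (w : ℕ → ℝ) (k : ℕ) : ℝ[X] :=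
  ∑ n ∈ s, C (w n) * binomialTail ℝ n k

namespace binomialTailMixture

variable {s : Finset ℕ} {w : ℕ → ℝ}

theorem eval_eq (k : ℕ) (t : ℝ) :
    (binomialTailMixture s w k).eval t = ∑ n ∈ s, w n * (binomialTail ℝ n k).eval t := by
  simp [binomialTailMixture, eval_finsetSum]

theorem monotoneOn (hw : ∀ n ∈ s, 0 ≤ w n) {k : ℕ} (hk : k ≠ 0) :
    MonotoneOn (fun t => (binomialTailMixture s w k).eval t) (Set.Icc 0 1) :=
  fun a ha b hb hab => by
    simp only [eval_eq]
    exact sum_le_sum fun n hn =>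
      mul_le_mul_of_nonneg_left (binomialTail.monotoneOn n hk ha hb hab) (hw n hn)

theorem eval_zero {k : ℕ} (hk : k ≠ 0) : (binomialTailMixture s w k).eval 0 = 0 := by
  simp [eval_eq, binomialTail.eval_zero ℝ _ hk]

theorem eval_one {k : ℕ} (hks : ∀ n ∈ s, k ≤ n) :
    (binomialTailMixture s w k).eval 1 = ∑ n ∈ s, w n := by
  rw [eval_eq]
  exact sum_congr rfl fun n hn => by rw [binomialTail.eval_one ℝ (hks n hn), mul_one]

theorem eval_succ_le (hw : ∀ n ∈ s, 0 ≤ w n) (k : ℕ) {t : ℝ} (h0 : 0 ≤ t) (h1 : t ≤ 1) :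
    (binomialTailMixture s w (k + 1)).eval t ≤ (binomialTailMixture s w k).eval t := by
  simp only [eval_eq]
  exact sum_le_sum fun n hn =>
    mul_le_mul_of_nonneg_left (binomialTail.eval_succ_le n k h0 h1) (hw n hn)

end binomialTailMixture

theorem order_statistic_mixture_cdf_general (K kmin : ℕ) (p : ℝ) (hp : 0 < p) (hp1 : p < 1)
    (hkmin : kmin ≤ K)
    (F : ℝ → ℝ) (hFcont : Continuous F) (hFmono : Monotone F)
    (hF01 : ∀ x, F x ∈ Set.Icc (0 : ℝ) 1)
    (hFbot : Tendsto F atBot (nhds 0)) (hFtop : Tendsto F atTop (nhds 1))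
    (cnz : ℝ)
    (hcnz : cnz = (∑ n ∈ Finset.Icc kmin K, (K.choose n : ℝ) * p ^ n * (1 - p) ^ (K - n))⁻¹)
    (G : ℕ → ℝ → ℝ)
    (hG : ∀ k x, G k x = ∑ n ∈ Finset.Icc kmin K, ∑ l ∈ Finset.Icc k n,
      (n.choose l : ℝ) * (K.choose n : ℝ) * cnz * p ^ n * (1 - p) ^ (K - n) *
        (F x) ^ l * (1 - F x) ^ (n - l)) :
    ∀ k : ℕ, 1 ≤ k → k ≤ kmin →
      (Monotone (G k) ∧
       (∀ x : ℝ, ContinuousWithinAt (G k) (Set.Ici x) x) ∧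
       Tendsto (G k) atBot (nhds 0) ∧
       Tendsto (G k) atTop (nhds 1) ∧
       (k < kmin → ∀ x : ℝ, G (k + 1) x ≤ G k x)) := by
  intro k hk hkkmin
  set w : ℕ → ℝ := fun n => cnz * (bernsteinPolynomial ℝ K n).eval p
  have hmass : 0 < (binomialTail ℝ K kmin).eval p := binomialTail.eval_pos hkmin hp hp1
  have hcnz_inv : cnz = ((binomialTail ℝ K kmin).eval p)⁻¹ := by
    rw [hcnz, binomialTail.eval_eq]
  have hw : ∀ n ∈ Icc kmin K, 0 ≤ w n := fun n _ =>
    mul_nonneg (hcnz_inv ▸ inv_nonneg.2 hmass.le)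
      (bernsteinPolynomial.eval_nonneg K n hp.le hp1.le)
  have hw1 : ∑ n ∈ Icc kmin K, w n = 1 := by
    rw [← mul_sum, ← eval_finsetSum, ← binomialTail, hcnz_inv, inv_mul_cancel₀ hmass.ne']
  have hGP : ∀ j, G j = fun x => (binomialTailMixture (Icc kmin K) w j).eval (F x) := by
    intro j
    ext x
    simp only [hG, binomialTailMixture.eval_eq, binomialTail.eval_eq, mul_sum, w,
      bernsteinPolynomial, eval_mul, eval_pow, eval_sub, eval_one, eval_X, eval_natCast]
    exact sum_congr rfl fun n _ => sum_congr rfl fun l _ => by ring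
  have hk0 : k ≠ 0 := by omega
  have hcont := (binomialTailMixture (Icc kmin K) w k).continuous
  refine ⟨?_, ?_, ?_, ?_, ?_⟩
  · exact hGP k ▸ fun x y hxy =>
      binomialTailMixture.monotoneOn hw hk0 (hF01 x) (hF01 y) (hFmono hxy)
  · exact fun x => hGP k ▸ (hcont.comp hFcont).continuousWithinAt
  · simpa [hGP k, Function.comp_def, binomialTailMixture.eval_zero hk0] using
      (hcont.tendsto 0).comp hFbot
  · have hks : ∀ n ∈ Icc kmin K, k ≤ n := fun n hn => hkkmin.trans (mem_Icc.1 hn).1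
    simpa [hGP k, Function.comp_def, binomialTailMixture.eval_one hks, hw1] using
      (hcont.tendsto 1).comp hFtop
  · exact fun _ x => by
      simpa only [hGP] using binomialTailMixture.eval_succ_le hw k (hF01 x).1 (hF01 x).2

/-- The mixed order-statistic CDF
G_k(x) = Σ_{n=k_min}^{K} Σ_{ℓ=k}^{n} C(n,ℓ)C(K,n) c_nz pⁿ(1−p)^{K−n} F(x)^ℓ(1−F(x))^{n−ℓ}
(for 1 ≤ k ≤ k_min, with F a continuous CDF) is itself a CDF (nondecreasing,
right-continuous, limit 0 at −∞ and 1 at +∞), and G_k(x) ≥ G_{k+1}(x) for all x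
and k < k_min. -/
theorem order_statistic_mixture_cdf (K kmin : ℕ) (p : ℝ) (hp : 0 < p) (hp1 : p < 1)
    (hkmin : kmin ≤ K) (hkmin1 : 1 ≤ kmin)
    (F : ℝ → ℝ) (hFcont : Continuous F) (hFmono : Monotone F)
    (hF01 : ∀ x, F x ∈ Set.Icc (0 : ℝ) 1)
    (hFbot : Tendsto F atBot (nhds 0)) (hFtop : Tendsto F atTop (nhds 1))
    (hFsupp : ∀ x < (0 : ℝ), F x = 0)
    (cnz : ℝ)
    (hcnz : cnz = (∑ n ∈ Finset.Icc kmin K, (K.choose n : ℝ) * p ^ n * (1 - p) ^ (K - n))⁻¹)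
    (G : ℕ → ℝ → ℝ)
    (hG : ∀ k x, G k x = ∑ n ∈ Finset.Icc kmin K, ∑ l ∈ Finset.Icc k n,
      (n.choose l : ℝ) * (K.choose n : ℝ) * cnz * p ^ n * (1 - p) ^ (K - n) *
        (F x) ^ l * (1 - F x) ^ (n - l)) :
    ∀ k : ℕ, 1 ≤ k → k ≤ kmin →
      (Monotone (G k) ∧
       (∀ x : ℝ, ContinuousWithinAt (G k) (Set.Ici x) x) ∧
       Tendsto (G k) atBot (nhds 0) ∧
       Tendsto (G k) atTop (nhds 1) ∧
       (k < kmin → ∀ x : ℝ, G (k + 1) x ≤ G k x)) :=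
  order_statistic_mixture_cdf_general K kmin p hp hp1 hkmin F hFcont hFmono hF01 hFbot hFtop cnz
    hcnz G hG
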